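/- For an h-transverse lattice polygon Δ with data (d^b, d^t, r, l) the balance condition d^t + ||r|| = d^b + ||l|| holds, and conversely any data (d^b, d^t, r, l) of nonnegative integers d^b, d^t and finitely supported functions r, l : Z → Z_{≥0} with |l| = |r| and d^t + ||r|| = d^b + ||l|| arises from a unique (up to translation) h-transverse convex lattice polygon. -/

import Mathlib

/-- ‖r‖ = ∑ k · r(k) for a multiset of integers r : ℤ →₀ ℕ. -/
def wnormZ (r : ℤ →₀ ℕ) : ℤ := r.sum fun k n => k * n

/-- |r| = ∑ r(k), the cardinality of the multiset r. -/
def cardZ (r : ℤ →₀ ℕ) : ℕ := r.sum fun _ n => n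

/-- The data of an h-transverse convex lattice polygon Δ with bottom edge
length db, top edge length dt, right normal-slope multiset r and left
normal-slope multiset l, normalized up to translation: xL j, xR j are the
x-coordinates of the left and right boundary at height j (0 ≤ j ≤ h), with
xL 0 = 0.  Convexity forces the right steps xR j - xR (j+1) nondecreasing and
the left steps xL j - xL (j+1) nonincreasing; r and l record the multisets of
steps (the slopes of the outer normals on the right and left sides, with
multiplicity the lattice lengths). -/
def IsHTPolygon (db dt : ℕ) (r l : ℤ →₀ ℕ) (h : ℕ) (xL xR : ℕ → ℤ) : Prop :=
  xL 0 = 0 ∧ xR 0 = (db : ℤ) ∧ xR h - xL h = (dt : ℤ) ∧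
  (∀ j, j ≤ h → xL j ≤ xR j) ∧
  (∀ j, j + 2 ≤ h → xR j - xR (j + 1) ≤ xR (j + 1) - xR (j + 2)) ∧
  (∀ j, j + 2 ≤ h → xL (j + 1) - xL (j + 2) ≤ xL j - xL (j + 1)) ∧
  (∀ k : ℤ, r k = ((Finset.range h).filter fun j => xR j - xR (j + 1) = k).card) ∧
  (∀ k : ℤ, l k = ((Finset.range h).filter fun j => xL j - xL (j + 1) = k).card) ∧
  (∀ j, h ≤ j → xL (j + 1) = xL j ∧ xR (j + 1) = xR j)

/-!
Describe the polygon row by row: at height j its left and right boundaries are at xL j and xR j,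
and each side is recorded by its drops x j - x (j+1), which are the normal slopes of its edges
counted with lattice length. Convexity says exactly that the drops are sorted (increasing on the
right, decreasing on the left), so each side is the sequence of partial sums of its slope multiset
listed in sorted order; this gives uniqueness. Telescoping shows that both multisets have the
height as cardinality and that xR h - xL h = d^b - ‖r‖ + ‖l‖, which is the balance condition.
Conversely, the sorted partial sums built from balanced data bound a polygon, because the width
xR - xL is concave in j and nonnegative at the bottom and at the top.
-/

theorem Nat.rel_of_forall_rel_succ_of_le_of_le_of_le {β : Type*} (r : β → β → Prop) [Std.Refl r]
    [IsTrans β r] {f : ℕ → β} {a b : ℕ} (hf : ∀ n, a ≤ n → n < b → r (f n) (f (n + 1)))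
    ⦃c d : ℕ⦄ (hac : a ≤ c) (hcd : c ≤ d) (hdb : d ≤ b) : r (f c) (f d) := by
  -- Freeze `f` from `b` on and apply the unbounded version.
  have key := Nat.rel_of_forall_rel_succ_of_le_of_le r (f := fun n => f (min n b))
    (fun n han => ?_) hac hcd
  · simpa only [min_eq_left hdb, min_eq_left (hcd.trans hdb)] using key
  · rcases lt_or_ge n b with hnb | hbn
    · simpa only [min_eq_left hnb.le, min_eq_left (Nat.succ_le_of_lt hnb)] using hf n han hnb
    · simp only [min_eq_right hbn, min_eq_right (hbn.trans n.le_succ)]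
      exact refl _

namespace HTransverse

def step (x : ℕ → ℤ) (j : ℕ) : ℤ := x j - x (j + 1)

def ofSteps (x₀ : ℤ) (s : ℕ → ℤ) (j : ℕ) : ℤ := x₀ - ∑ i ∈ Finset.range j, s i

theorem eq_ofSteps_iff {x : ℕ → ℤ} {x₀ : ℤ} {s : ℕ → ℤ} :
    x = ofSteps x₀ s ↔ x 0 = x₀ ∧ step x = s := by
  constructor
  · rintro rfl
    refine ⟨by simp [ofSteps], funext fun j => ?_⟩
    simp [step, ofSteps, Finset.sum_range_succ]
  · rintro ⟨rfl, rfl⟩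
    funext j
    simp only [ofSteps, step, Finset.sum_range_sub', sub_sub_cancel]

theorem nonneg_of_concave {f : ℕ → ℤ} {h : ℕ}
    (hf : ∀ j, j + 2 ≤ h → step f j ≤ step f (j + 1)) (h₀ : 0 ≤ f 0) (hh : 0 ≤ f h)
    {j : ℕ} (hj : j ≤ h) : 0 ≤ f j := by
  have step_mono : ∀ ⦃i k⦄, i ≤ k → k < h → step f i ≤ step f k := fun i k hik hk =>
    Nat.rel_of_forall_rel_succ_of_le_of_le_of_le (· ≤ ·) (a := 0) (b := h - 1)
      (fun n _ hn => hf n (by omega)) (Nat.zero_le i) hik (by omega)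
  rcases hj.eq_or_lt with rfl | hjh
  · exact hh
  -- f rises up to height j if its drop at j is nonpositive, and falls from j to h otherwise.
  rcases le_or_gt (step f j) 0 with hdj | hdj
  · have hrise : f 0 ≤ f j :=
      Nat.rel_of_forall_rel_succ_of_le_of_le_of_le (· ≤ ·) (a := 0) (b := j)
        (fun n _ hn => by have := step_mono hn.le hjh; unfold step at this hdj; omega)
        le_rfl (Nat.zero_le j) le_rfl
    exact h₀.trans hrise
  · have hfall : f h ≤ f j :=
      Nat.rel_of_forall_rel_succ_of_le_of_le_of_le (· ≥ ·) (a := j) (b := h)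
        (fun n hn hnh => by have := step_mono hn hnh; unfold step at this hdj; omega)
        le_rfl hj le_rfl
    exact hh.trans hfall

theorem map_range_eq_toMultiset_iff (r : ℤ →₀ ℕ) (h : ℕ) (s : ℕ → ℤ) :
    (Multiset.range h).map s = r.toMultiset ↔
      ∀ k, r k = ((Finset.range h).filter fun j => s j = k).card := by
  simp only [Multiset.ext, Finsupp.count_toMultiset, Multiset.count_map, Finset.card_def,
    Finset.filter_val, Finset.range_val, eq_comm (b := s _), eq_comm (b := r _)]

theorem cardZ_eq_card_toMultiset (r : ℤ →₀ ℕ) : cardZ r = Multiset.card r.toMultiset :=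
  (Finsupp.card_toMultiset r).symm

theorem wnormZ_eq_sum_toMultiset (r : ℤ →₀ ℕ) : wnormZ r = r.toMultiset.sum := by
  simp only [wnormZ, Finsupp.sum_toMultiset, nsmul_eq_mul, mul_comm]

def IsBoundary (R : ℤ → ℤ → Prop) (x₀ : ℤ) (m : Multiset ℤ) (h : ℕ) (x : ℕ → ℤ) : Prop :=
  x 0 = x₀ ∧ (∀ j, j + 2 ≤ h → R (step x j) (step x (j + 1))) ∧
    (Multiset.range h).map (step x) = m ∧ ∀ j, h ≤ j → step x j = 0

namespace IsBoundary

variable {R : ℤ → ℤ → Prop} {x₀ : ℤ} {m : Multiset ℤ} {h : ℕ} {x : ℕ → ℤ}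

theorem card_eq (hx : IsBoundary R x₀ m h x) : Multiset.card m = h := by
  rw [← hx.2.2.1, Multiset.card_map, Multiset.card_range]

theorem apply_eq_sub_sum (hx : IsBoundary R x₀ m h x) : x h = x₀ - m.sum := by
  have htelescope : ((Multiset.range h).map (step x)).sum = x 0 - x h :=
    Finset.sum_range_sub' x h
  rw [← hx.2.2.1, ← hx.1, htelescope, sub_sub_cancel]

theorem le_of_ge_of_le {xL xR : ℕ → ℤ} {a b : ℤ} {mL mR : Multiset ℤ}
    (hL : IsBoundary (· ≥ ·) a mL h xL) (hR : IsBoundary (· ≤ ·) b mR h xR)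
    (h₀ : xL 0 ≤ xR 0) (hh : xL h ≤ xR h) {j : ℕ} (hj : j ≤ h) : xL j ≤ xR j := by
  have hconc : ∀ i, i + 2 ≤ h → step (xR - xL) i ≤ step (xR - xL) (i + 1) := fun i hi => by
    have hLi := hL.2.1 i hi
    have hRi := hR.2.1 i hi
    simp only [step, Pi.sub_apply] at hLi hRi ⊢
    omega
  exact sub_nonneg.1 (nonneg_of_concave hconc (sub_nonneg.2 h₀) (sub_nonneg.2 hh) hj)

end IsBoundary

section SortedSteps

variable (R : ℤ → ℤ → Prop) [DecidableRel R] [IsTrans ℤ R] [Std.Antisymm R] [Std.Total R]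

-- Padding by `0` makes the boundary constant above the top edge.
def sortedSteps (m : Multiset ℤ) (j : ℕ) : ℤ := (m.sort R).getD j 0

theorem eq_sortedSteps_iff {m : Multiset ℤ} {h : ℕ} (hm : Multiset.card m = h) {s : ℕ → ℤ} :
    s = sortedSteps R m ↔ (∀ j, j + 2 ≤ h → R (s j) (s (j + 1))) ∧
      (Multiset.range h).map s = m ∧ ∀ j, h ≤ j → s j = 0 := by
  have hlen : (m.sort R).length = h := by rw [Multiset.length_sort, hm]
  have map_getD : ∀ L : List ℤ, (List.range L.length).map (fun j => L.getD j 0) = L := fun L =>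
    List.ext_getElem (by simp) fun i _ hi => by simp [List.getElem?_eq_getElem hi]
  constructor
  · rintro rfl
    refine ⟨fun j hj => ?_, ?_, fun j hj => List.getD_eq_default _ _ (hlen ▸ hj)⟩
    · simp only [sortedSteps, List.getD_eq_getElem _ _ (hlen ▸ (by omega : j < h)),
        List.getD_eq_getElem _ _ (hlen ▸ (by omega : j + 1 < h))]
      exact List.pairwise_iff_getElem.1 (m.pairwise_sort R) _ _ _ _ (Nat.lt_succ_self j)
    · rw [← hlen, Multiset.range, Multiset.map_coe]
      exact (congrArg _ (map_getD _)).trans (Multiset.sort_eq _ _)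
  · rintro ⟨hchain, hmap, hzero⟩
    have hsorted : ((List.range h).map s).Pairwise R := by
      rw [← List.isChain_iff_pairwise, List.isChain_map, List.isChain_range]
      exact fun j hj => hchain j (by omega)
    have hperm : (List.range h).map s = m.sort R :=
      List.Perm.eq_of_pairwise' hsorted (m.pairwise_sort R)
        (Multiset.coe_eq_coe.1 (by rw [Multiset.sort_eq, ← hmap]; rfl))
    funext j
    rcases lt_or_ge j h with hj | hj
    · rw [sortedSteps, ← hperm, List.getD_eq_getElem _ _ (by simpa using hj)]
      simp
    · rw [hzero j hj, sortedSteps, List.getD_eq_default _ _ (hlen ▸ hj)]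

theorem isBoundary_iff {x₀ : ℤ} {m : Multiset ℤ} {h : ℕ} (hm : Multiset.card m = h) {x : ℕ → ℤ} :
    IsBoundary R x₀ m h x ↔ x = ofSteps x₀ (sortedSteps R m) := by
  rw [eq_ofSteps_iff, eq_sortedSteps_iff R hm, IsBoundary]

end SortedSteps

theorem isHTPolygon_iff {db dt : ℕ} {r l : ℤ →₀ ℕ} {h : ℕ} {xL xR : ℕ → ℤ} :
    IsHTPolygon db dt r l h xL xR ↔
      IsBoundary (· ≥ ·) 0 l.toMultiset h xL ∧ IsBoundary (· ≤ ·) db r.toMultiset h xR ∧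
        xR h - xL h = dt ∧ ∀ j, j ≤ h → xL j ≤ xR j := by
  simp only [IsHTPolygon, IsBoundary, map_range_eq_toMultiset_iff, step, sub_eq_zero, forall_and,
    ge_iff_le, add_assoc, Nat.reduceAdd, @eq_comm _ (xL (_ + 1)), @eq_comm _ (xR (_ + 1))]
  tauto

end HTransverse

open HTransverse

theorem stmt_14 (db dt : ℕ) (r l : ℤ →₀ ℕ) :
    (∀ (h : ℕ) (xL xR : ℕ → ℤ), IsHTPolygon db dt r l h xL xR →
        cardZ l = cardZ r ∧ (dt : ℤ) + wnormZ r = (db : ℤ) + wnormZ l) ∧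
    (cardZ l = cardZ r → (dt : ℤ) + wnormZ r = (db : ℤ) + wnormZ l →
        ∃! p : (ℕ → ℤ) × (ℕ → ℤ), IsHTPolygon db dt r l (cardZ r) p.1 p.2) := by
  simp only [cardZ_eq_card_toMultiset, wnormZ_eq_sum_toMultiset]
  refine ⟨fun h xL xR hP => ?_, fun hcard hbal => ?_⟩
  · obtain ⟨hL, hR, htop, -⟩ := isHTPolygon_iff.1 hP
    refine ⟨hL.card_eq.trans hR.card_eq.symm, ?_⟩
    rw [← htop, hL.apply_eq_sub_sum, hR.apply_eq_sub_sum]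
    ring
  · set xL₀ := ofSteps 0 (sortedSteps (· ≥ ·) l.toMultiset)
    set xR₀ := ofSteps db (sortedSteps (· ≤ ·) r.toMultiset)
    have hL x := isBoundary_iff (· ≥ ·) (x₀ := 0) hcard (x := x)
    have hR x := isBoundary_iff (· ≤ ·) (x₀ := db) (m := r.toMultiset) rfl (x := x)
    refine ⟨(xL₀, xR₀), ?_, fun p hp => ?_⟩
    · have hbL := (hL xL₀).2 rfl
      have hbR := (hR xR₀).2 rfl
      have htop : xR₀ (Multiset.card r.toMultiset) - xL₀ (Multiset.card r.toMultiset) = dt := by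
        rw [hbL.apply_eq_sub_sum, hbR.apply_eq_sub_sum]
        linarith
      refine isHTPolygon_iff.2 ⟨hbL, hbR, htop, fun j hj => hbL.le_of_ge_of_le hbR ?_ ?_ hj⟩
      · rw [hbL.1, hbR.1]; positivity
      · omega
    · obtain ⟨hpL, hpR, -⟩ := isHTPolygon_iff.1 hp
      exact Prod.ext ((hL _).1 hpL) ((hR _).1 hpR)
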